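/- For ε > 0, define ⟨x,y⟩_ε = ⟨x,(I−Π(μ))y⟩_{1/μ} + ε⟨x,Π(μ)y⟩_{1/μ}. Then ⟨·,·⟩_ε is an inner product on ℝ^N, and the induced operator norm satisfies ‖J(μ)‖_ε ≤ √( ‖(I−Π(μ))J(μ)‖²_{1/μ} + ε ‖Π(μ)−S(μ)‖²_{1/μ} ). -/

import Mathlib

open Matrix BigOperators

/-- A matrix is column stochastic: nonnegative entries, each column sums to one. -/
def ColStoch {m : Type*} [Fintype m] (M : Matrix m m ℝ) : Prop :=
  (∀ i j, 0 ≤ M i j) ∧ ∀ j, ∑ i, M i j = 1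

/-- Irreducibility of a matrix via its pattern of nonzero entries:
the associated directed graph is strongly connected. -/
def Irred {m : Type*} [Fintype m] [DecidableEq m] (M : Matrix m m ℝ) : Prop :=
  ∀ i j, ∃ k : ℕ, 0 < k ∧ (M ^ k) i j ≠ 0

/-- Weighted inner product `⟨x,y⟩_w = ∑ i, x i * y i * w i`. -/
def innerW {m : Type*} [Fintype m] (w x y : m → ℝ) : ℝ := ∑ i, x i * y i * w i

/-- Weighted `ℓ²(w)` norm. -/
noncomputable def normW {m : Type*} [Fintype m] (w x : m → ℝ) : ℝ :=
  Real.sqrt (innerW w x x)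

/-- Operator norm of a matrix with respect to the `ℓ²(w)` norm. -/
noncomputable def opNormW {m : Type*} [Fintype m] (w : m → ℝ) (M : Matrix m m ℝ) : ℝ :=
  sInf {c | 0 ≤ c ∧ ∀ x, normW w (M.mulVec x) ≤ c * normW w x}

/-- Aggregation operator for the partition `{f⁻¹(i)}` of `Fin N`. -/
def Agg {N n : ℕ} (f : Fin N → Fin n) : Matrix (Fin n) (Fin N) ℝ :=
  fun i x => if f x = i then 1 else 0

/-- Disaggregation operator for the partition `{f⁻¹(i)}` and weight vector ν. -/
noncomputable def Disagg {N n : ℕ} (f : Fin N → Fin n) (ν : Fin N → ℝ) :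
    Matrix (Fin N) (Fin n) ℝ :=
  fun j i => if f j = i then ν j / (Agg f).mulVec ν i else 0

/-- Coarse approximation `C(ν) = A P D(ν)`. -/
noncomputable def CoarseC {N n : ℕ} (P : Matrix (Fin N) (Fin N) ℝ) (f : Fin N → Fin n)
    (ν : Fin N → ℝ) : Matrix (Fin n) (Fin n) ℝ := Agg f * P * Disagg f ν

/-- `P̂ = P - μ 𝟙ᵀ`. -/
def hatP {N : ℕ} (P : Matrix (Fin N) (Fin N) ℝ) (μ : Fin N → ℝ) :
    Matrix (Fin N) (Fin N) ℝ := P - vecMulVec μ 1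

/-- Coarse projection `S(ν) = D(ν)[A(I-P+μ𝟙ᵀ)D(ν)]⁻¹ A(I-P+μ𝟙ᵀ)`. -/
noncomputable def CoarseS {N n : ℕ} (P : Matrix (Fin N) (Fin N) ℝ) (f : Fin N → Fin n)
    (μ ν : Fin N → ℝ) : Matrix (Fin N) (Fin N) ℝ :=
  Disagg f ν * (Agg f * (1 - P + vecMulVec μ 1) * Disagg f ν)⁻¹ *
    (Agg f * (1 - P + vecMulVec μ 1))

/-- Orthogonal coarse projection `Π(ν) = D(ν) A`. -/
noncomputable def PiProj {N n : ℕ} (f : Fin N → Fin n) (ν : Fin N → ℝ) :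
    Matrix (Fin N) (Fin N) ℝ := Disagg f ν * Agg f

/-- Error propagation operator `J(ν) = P̂ (I - S(ν))`. -/
noncomputable def Jop {N n : ℕ} (P : Matrix (Fin N) (Fin N) ℝ) (f : Fin N → Fin n)
    (μ ν : Fin N → ℝ) : Matrix (Fin N) (Fin N) ℝ := hatP P μ * (1 - CoarseS P f μ ν)

/-- Spectrum (set of complex eigenvalues) of a real matrix. -/
noncomputable def specC {N : ℕ} (M : Matrix (Fin N) (Fin N) ℝ) : Set ℂ :=
  spectrum ℂ (M.map (Complex.ofReal))

/-- Spectral radius of a real matrix. -/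
noncomputable def specRad {N : ℕ} (M : Matrix (Fin N) (Fin N) ℝ) : ℝ :=
  sSup ((fun z : ℂ => ‖z‖) '' specC M)

/-- The `ℓ²(1/μ)`-adjoint `diag(μ) Mᵀ diag(1/μ)`. -/
noncomputable def adjW {N : ℕ} (μ : Fin N → ℝ) (M : Matrix (Fin N) (Fin N) ℝ) :
    Matrix (Fin N) (Fin N) ℝ :=
  Matrix.diagonal μ * Mᵀ * Matrix.diagonal (fun i => (μ i)⁻¹)

/-- The ε-inner product `⟨x,y⟩_ε = ⟨x,(I-Π(μ))y⟩_{1/μ} + ε ⟨x,Π(μ)y⟩_{1/μ}`. -/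
noncomputable def innerEps {N n : ℕ} (f : Fin N → Fin n) (μ : Fin N → ℝ) (ε : ℝ)
    (x y : Fin N → ℝ) : ℝ :=
  innerW (fun i => (μ i)⁻¹) x ((1 - PiProj f μ).mulVec y) +
    ε * innerW (fun i => (μ i)⁻¹) x ((PiProj f μ).mulVec y)

/-- The ε-norm. -/
noncomputable def normEps {N n : ℕ} (f : Fin N → Fin n) (μ : Fin N → ℝ) (ε : ℝ)
    (x : Fin N → ℝ) : ℝ := Real.sqrt (innerEps f μ ε x x)

/-- Operator norm induced by the ε-norm. -/
noncomputable def opNormEps {N n : ℕ} (f : Fin N → Fin n) (μ : Fin N → ℝ) (ε : ℝ)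
    (M : Matrix (Fin N) (Fin N) ℝ) : ℝ :=
  sInf {c | 0 ≤ c ∧ ∀ x, normEps f μ ε (M.mulVec x) ≤ c * normEps f μ ε x}

/-!
`Π(μ)` is idempotent and self-adjoint in `ℓ²(1/μ)`, so `⟨x,x⟩_ε = ‖(I-Π)x‖² + ε‖Πx‖²`, which
makes `⟨·,·⟩_ε` an inner product. The coarse matrix `A(I-P+μ𝟙ᵀ)D(μ)` equals `I - C + (Aμ)𝟙ᵀ`
with `C = A P D(μ)` column stochastic, irreducible and fixing `Aμ > 0`; by the Perron–Frobenius
argument it is invertible. Hence `S Π = Π` and `Π J = Π - S`, so `J x = J u` with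
`u = (I-Π)x`, and
`‖J x‖²_ε = ‖(I-Π)J u‖² + ε‖(Π-S)u‖² ≤ (‖(I-Π)J‖² + ε‖Π-S‖²)‖u‖²` with `‖u‖ ≤ ‖x‖_ε`.
-/

section WeightedInner

variable {m : Type*} [Fintype m] {w : m → ℝ}

lemma innerW_comm (w x y : m → ℝ) : innerW w x y = innerW w y x := by
  simp only [innerW, mul_comm (x _)]

lemma innerW_add_left (w x y z : m → ℝ) :
    innerW w (x + y) z = innerW w x z + innerW w y z := by
  simp only [innerW, Pi.add_apply, add_mul, Finset.sum_add_distrib]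

lemma innerW_smul_left (w : m → ℝ) (c : ℝ) (x y : m → ℝ) :
    innerW w (c • x) y = c * innerW w x y := by
  simp only [innerW, Pi.smul_apply, smul_eq_mul, Finset.mul_sum, mul_assoc]

lemma innerW_self_nonneg (hw : ∀ i, 0 ≤ w i) (x : m → ℝ) : 0 ≤ innerW w x x :=
  Finset.sum_nonneg fun i _ => mul_nonneg (mul_self_nonneg (x i)) (hw i)

lemma innerW_self_pos (hw : ∀ i, 0 < w i) {x : m → ℝ} (hx : x ≠ 0) : 0 < innerW w x x := by
  obtain ⟨i, hi⟩ := Function.ne_iff.mp hx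
  exact Finset.sum_pos' (fun j _ => mul_nonneg (mul_self_nonneg (x j)) (hw j).le)
    ⟨i, Finset.mem_univ i, mul_pos (mul_self_pos.mpr hi) (hw i)⟩

lemma normW_sq (hw : ∀ i, 0 ≤ w i) (x : m → ℝ) : normW w x ^ 2 = innerW w x x :=
  Real.sq_sqrt (innerW_self_nonneg hw x)

lemma innerW_eq_dotProduct [DecidableEq m] (w x y : m → ℝ) :
    innerW w x y = x ⬝ᵥ (diagonal w *ᵥ y) := by
  simp only [innerW, dotProduct, mulVec_diagonal, mul_left_comm, mul_comm]

lemma innerW_mulVec_comm [DecidableEq m] {M : Matrix m m ℝ} (hM : (diagonal w * M).IsSymm)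
    (x y : m → ℝ) : innerW w x (M *ᵥ y) = innerW w (M *ᵥ x) y := by
  rw [innerW_comm w (M *ᵥ x), innerW_eq_dotProduct, innerW_eq_dotProduct, mulVec_mulVec,
    mulVec_mulVec, dotProduct_mulVec, ← mulVec_transpose, hM.eq, dotProduct_comm]

lemma innerW_mulVec_self [DecidableEq m] {M : Matrix m m ℝ} (hM : (diagonal w * M).IsSymm)
    (hidem : IsIdempotentElem M) (x : m → ℝ) :
    innerW w x (M *ᵥ x) = innerW w (M *ᵥ x) (M *ᵥ x) := by
  conv_lhs => rw [← hidem.eq, ← mulVec_mulVec]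
  exact innerW_mulVec_comm hM x (M *ᵥ x)

end WeightedInner

section WeightedOpNorm

variable {m : Type*} [Fintype m] {w : m → ℝ}

lemma normW_eq_norm_toLp (hw : ∀ i, 0 ≤ w i) (x : m → ℝ) :
    normW w x = ‖WithLp.toLp 2 (fun i => √(w i) * x i)‖ := by
  rw [EuclideanSpace.norm_eq, normW, innerW]
  congr 1
  refine Finset.sum_congr rfl fun i _ => ?_
  simp only [Real.norm_eq_abs, sq_abs, mul_pow, Real.sq_sqrt (hw i)]
  ring

lemma opNormW_set_nonempty [DecidableEq m] (hw : ∀ i, 0 < w i) (M : Matrix m m ℝ) :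
    {c | 0 ≤ c ∧ ∀ x, normW w (M *ᵥ x) ≤ c * normW w x}.Nonempty := by
  let B := diagonal (fun i => √(w i)) * M * diagonal (fun i => (√(w i))⁻¹)
  refine ⟨‖toEuclideanCLM (𝕜 := ℝ) B‖, norm_nonneg _, fun x => ?_⟩
  have hB : B *ᵥ (fun i => √(w i) * x i) = fun i => √(w i) * (M *ᵥ x) i := by
    have : diagonal (fun i => (√(w i))⁻¹) *ᵥ (fun i => √(w i) * x i) = x := by
      ext i
      simp [mulVec_diagonal, inv_mul_cancel_left₀ (Real.sqrt_pos.mpr (hw i)).ne']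
    ext i
    simp only [B, ← mulVec_mulVec, this, mulVec_diagonal]
  rw [normW_eq_norm_toLp (fun i => (hw i).le), normW_eq_norm_toLp (fun i => (hw i).le), ← hB,
    ← toEuclideanCLM_toLp]
  exact (toEuclideanCLM (𝕜 := ℝ) B).le_opNorm _

lemma normW_mulVec_le [DecidableEq m] (hw : ∀ i, 0 < w i) (M : Matrix m m ℝ) (x : m → ℝ) :
    normW w (M *ᵥ x) ≤ opNormW w M * normW w x := by
  rcases (Real.sqrt_nonneg (innerW w x x)).eq_or_lt with hx | (hx : 0 < normW w x)
  · obtain ⟨c, -, hc⟩ := opNormW_set_nonempty hw M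
    simpa [normW, ← hx] using hc x
  · rw [← div_le_iff₀ hx]
    exact le_csInf (opNormW_set_nonempty hw M) fun c hc => (div_le_iff₀ hx).mpr (hc.2 x)

lemma innerW_mulVec_self_le [DecidableEq m] (hw : ∀ i, 0 < w i) (M : Matrix m m ℝ)
    (x : m → ℝ) : innerW w (M *ᵥ x) (M *ᵥ x) ≤ opNormW w M ^ 2 * innerW w x x := by
  have hw' : ∀ i, 0 ≤ w i := fun i => (hw i).le
  rw [← normW_sq hw', ← normW_sq hw', ← mul_pow]
  exact pow_le_pow_left₀ (Real.sqrt_nonneg _) (normW_mulVec_le hw M x) 2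

end WeightedOpNorm

section Irreducible

open Relation

variable {ι : Type*} [Fintype ι]

lemma Irred.transGen [DecidableEq ι] {P : Matrix ι ι ℝ} (hP : Irred P) (i j : ι) :
    TransGen (fun a b => P a b ≠ 0) i j := by
  suffices key : ∀ k i, (P ^ (k + 1)) i j ≠ 0 → TransGen (fun a b => P a b ≠ 0) i j by
    obtain ⟨k, hk, hne⟩ := hP i j
    obtain ⟨k, rfl⟩ := Nat.exists_eq_add_of_lt hk
    exact key k i (by simpa [add_comm] using hne)
  intro k
  induction k with
  | zero => exact fun i h => TransGen.single (by simpa using h)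
  | succ k ih =>
    intro i h
    rw [pow_succ', mul_apply] at h
    obtain ⟨l, -, hl⟩ := Finset.exists_ne_zero_of_sum_ne_zero h
    exact TransGen.head (left_ne_zero_of_mul hl) (ih l (right_ne_zero_of_mul hl))

/-- Positivity of a nonnegative fixed vector propagates backwards along edges,
since `z i ≥ C i j * z j`. -/
lemma pos_of_transGen {C : Matrix ι ι ℝ} (hC : ∀ i j, 0 ≤ C i j) {z : ι → ℝ}
    (hz : ∀ i, 0 ≤ z i) (hCz : C *ᵥ z = z) {i j : ι}
    (hij : TransGen (fun a b => C a b ≠ 0) i j) (hj : 0 < z j) : 0 < z i := by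
  have step : ∀ a b, C a b ≠ 0 → 0 < z b → 0 < z a := fun a b hab hb => by
    rw [← hCz]
    exact (mul_pos ((hC a b).lt_of_ne' hab) hb).trans_le
      (Finset.single_le_sum (fun l _ => mul_nonneg (hC a l) (hz l)) (Finset.mem_univ b))
  induction hij using TransGen.head_induction_on with
  | single hab => exact step _ _ hab hj
  | head hac _ ih => exact step _ _ hac ih

lemma eq_smul_of_mulVec_eq_self {C : Matrix ι ι ℝ} (hC : ∀ i j, 0 ≤ C i j)
    (hirr : ∀ i j, TransGen (fun a b => C a b ≠ 0) i j) {ν : ι → ℝ} (hν : ∀ i, 0 < ν i)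
    (hCν : C *ᵥ ν = ν) {x : ι → ℝ} (hCx : C *ᵥ x = x) : ∃ t : ℝ, x = t • ν := by
  cases isEmpty_or_nonempty ι
  · exact ⟨0, Subsingleton.elim _ _⟩
  obtain ⟨i₀, hi₀⟩ := Finite.exists_min fun i => x i / ν i
  set t := x i₀ / ν i₀
  refine ⟨t, ?_⟩
  have hz : ∀ i, 0 ≤ (x - t • ν) i := fun i => by
    have := (le_div_iff₀ (hν i)).mp (hi₀ i)
    simp only [Pi.sub_apply, Pi.smul_apply, smul_eq_mul]
    linarith
  have hCz : C *ᵥ (x - t • ν) = x - t • ν := by rw [mulVec_sub, mulVec_smul, hCx, hCν]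
  have hzi₀ : (x - t • ν) i₀ = 0 := by
    simp [t, div_mul_cancel₀ _ (hν i₀).ne']
  -- `x - t • ν` is a nonnegative fixed vector vanishing at `i₀`, hence vanishes everywhere.
  refine (sub_eq_zero.mp (funext fun j => ?_))
  by_contra hj
  exact (pos_of_transGen hC hz hCz (hirr i₀ j) ((hz j).lt_of_ne' hj)).ne' hzi₀

lemma isUnit_det_one_sub_add_vecMulVec [DecidableEq ι] {C : Matrix ι ι ℝ}
    (hC : ∀ i j, 0 ≤ C i j) (hirr : ∀ i j, TransGen (fun a b => C a b ≠ 0) i j)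
    (hcol : 1 ᵥ* C = 1) {ν : ι → ℝ} (hν : ∀ i, 0 < ν i) (hCν : C *ᵥ ν = ν)
    (hνsum : 1 ⬝ᵥ ν = 1) : IsUnit (1 - C + vecMulVec ν 1).det := by
  rw [isUnit_iff_ne_zero, Ne, ← exists_mulVec_eq_zero_iff]
  rintro ⟨v, hv, hker⟩
  rw [add_mulVec, sub_mulVec, one_mulVec, vecMulVec_mulVec] at hker
  have hsum : 1 ⬝ᵥ v = 0 := by
    simpa [dotProduct_add, dotProduct_sub, dotProduct_mulVec, hcol, hνsum, dotProduct_comm 1 v]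
      using congrArg (1 ⬝ᵥ ·) hker
  have hfix : C *ᵥ v = v := by
    simp only [hsum, MulOpposite.op_zero, zero_smul, add_zero] at hker
    exact (sub_eq_zero.mp hker).symm
  obtain ⟨t, rfl⟩ := eq_smul_of_mulVec_eq_self hC hirr hν hCν hfix
  rw [dotProduct_smul, hνsum, smul_eq_mul, mul_one] at hsum
  exact hv (by rw [hsum, zero_smul])

end Irreducible

section NonnegMatrix

variable {l m o : Type*} [Fintype m] {M : Matrix l m ℝ} {O : Matrix m o ℝ}

lemma mul_apply_nonneg (hM : ∀ i j, 0 ≤ M i j) (hO : ∀ i j, 0 ≤ O i j) (i : l) (j : o) :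
    0 ≤ (M * O) i j :=
  Finset.sum_nonneg fun k _ => mul_nonneg (hM i k) (hO k j)

lemma le_mul_apply (hM : ∀ i j, 0 ≤ M i j) (hO : ∀ i j, 0 ≤ O i j) (i : l) (k : m) (j : o) :
    M i k * O k j ≤ (M * O) i j :=
  Finset.single_le_sum (fun k _ => mul_nonneg (hM i k) (hO k j)) (Finset.mem_univ k)

lemma ColStoch.one_vecMul {M : Matrix m m ℝ} (hM : ColStoch M) : 1 ᵥ* M = 1 := by
  ext j
  simpa [vecMul, dotProduct] using hM.2 j

end NonnegMatrix

section Partition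

variable {N n : ℕ} (f : Fin N → Fin n) {μ : Fin N → ℝ}

lemma agg_nonneg (i : Fin n) (j : Fin N) : 0 ≤ Agg f i j := by
  unfold Agg; split_ifs <;> norm_num

lemma one_vecMul_agg : 1 ᵥ* Agg f = 1 := by
  ext j
  simp [vecMul, dotProduct, Agg]

lemma agg_mulVec_pos (hμ : ∀ j, 0 < μ j) (j : Fin N) : 0 < (Agg f *ᵥ μ) (f j) :=
  (hμ j).trans_le <| by
    simpa [Agg, mulVec, dotProduct] using Finset.single_le_sum
      (f := fun k => Agg f (f j) k * μ k) (fun k _ => mul_nonneg (agg_nonneg f _ k) (hμ k).le)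
      (Finset.mem_univ j)

lemma agg_mulVec_pos_of_surjective (hf : Function.Surjective f) (hμ : ∀ j, 0 < μ j)
    (i : Fin n) : 0 < (Agg f *ᵥ μ) i := by
  obtain ⟨j, rfl⟩ := hf i
  exact agg_mulVec_pos f hμ j

lemma agg_apply_sq (i : Fin n) (j : Fin N) : Agg f i j ^ 2 = Agg f i j := by
  unfold Agg; split_ifs <;> norm_num

lemma disagg_apply (j : Fin N) (i : Fin n) :
    Disagg f μ j i = Agg f i j * μ j / (Agg f *ᵥ μ) i := by
  unfold Disagg Agg; split_ifs <;> simp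

lemma disagg_nonneg (hμ : ∀ j, 0 < μ j) (j : Fin N) (i : Fin n) : 0 ≤ Disagg f μ j i := by
  unfold Disagg
  split_ifs with h
  · exact div_nonneg (hμ j).le (h ▸ agg_mulVec_pos f hμ j).le
  · exact le_rfl

lemma disagg_apply_self_pos (hμ : ∀ j, 0 < μ j) (j : Fin N) : 0 < Disagg f μ j (f j) := by
  simpa [Disagg] using div_pos (hμ j) (agg_mulVec_pos f hμ j)

lemma agg_mul_disagg (hf : Function.Surjective f) (hμ : ∀ j, 0 < μ j) :
    Agg f * Disagg f μ = 1 := by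
  ext i i'
  have hpos := (agg_mulVec_pos_of_surjective f hf hμ i').ne'
  simp only [mul_apply, disagg_apply, one_apply, mul_div_assoc', ← Finset.sum_div]
  split_ifs with h
  · subst h
    refine (div_eq_one_iff_eq hpos).mpr (Finset.sum_congr rfl fun j _ => ?_)
    rw [← mul_assoc, ← sq, agg_apply_sq]
  · refine div_eq_zero_iff.mpr (Or.inl (Finset.sum_eq_zero fun j _ => ?_))
    unfold Agg; split_ifs with h1 h2 <;> simp_all

lemma one_vecMul_disagg (hf : Function.Surjective f) (hμ : ∀ j, 0 < μ j) :
    1 ᵥ* Disagg f μ = 1 := by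
  ext i
  simp only [vecMul, dotProduct, Pi.one_apply, one_mul, disagg_apply, ← Finset.sum_div]
  exact div_self (agg_mulVec_pos_of_surjective f hf hμ i).ne'

lemma disagg_mulVec_agg_mulVec (hμ : ∀ j, 0 < μ j) : Disagg f μ *ᵥ (Agg f *ᵥ μ) = μ := by
  ext j
  rw [mulVec, dotProduct, Finset.sum_eq_single (f j)]
  · simp [Disagg, div_mul_cancel₀ _ (agg_mulVec_pos f hμ j).ne']
  · intro i _ hi
    simp [Disagg, Ne.symm hi]
  · simp

lemma diagonal_inv_mul_disagg (hμ : ∀ j, μ j ≠ 0) :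
    diagonal (fun j => (μ j)⁻¹) * Disagg f μ =
      (Agg f)ᵀ * diagonal (fun i => ((Agg f *ᵥ μ) i)⁻¹) := by
  ext j i
  simp only [diagonal_mul, mul_diagonal, transpose_apply, disagg_apply]
  field_simp [hμ j]

lemma isSymm_diagonal_inv_mul_piProj (hμ : ∀ j, μ j ≠ 0) :
    (diagonal (fun j => (μ j)⁻¹) * PiProj f μ).IsSymm := by
  rw [PiProj, ← Matrix.mul_assoc, diagonal_inv_mul_disagg f hμ, IsSymm, transpose_mul,
    transpose_mul, transpose_transpose, (isSymm_diagonal _).eq, Matrix.mul_assoc]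

lemma isSymm_diagonal_inv_mul_one_sub_piProj (hμ : ∀ j, μ j ≠ 0) :
    (diagonal (fun j => (μ j)⁻¹) * (1 - PiProj f μ)).IsSymm := by
  rw [Matrix.mul_sub, Matrix.mul_one]
  exact (isSymm_diagonal _).sub (isSymm_diagonal_inv_mul_piProj f hμ)

lemma isIdempotentElem_piProj (hf : Function.Surjective f) (hμ : ∀ j, 0 < μ j) :
    IsIdempotentElem (PiProj f μ) := by
  rw [IsIdempotentElem, PiProj, Matrix.mul_assoc, ← Matrix.mul_assoc (Agg f),
    agg_mul_disagg f hf hμ, Matrix.one_mul]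

end Partition

section Coarse

open Relation

variable {N n : ℕ} (P : Matrix (Fin N) (Fin N) ℝ) (f : Fin N → Fin n) {μ : Fin N → ℝ}

lemma coarseC_nonneg (hP : ∀ i j, 0 ≤ P i j) (hμ : ∀ j, 0 < μ j) (i i' : Fin n) :
    0 ≤ CoarseC P f μ i i' :=
  mul_apply_nonneg (mul_apply_nonneg (agg_nonneg f) hP) (disagg_nonneg f hμ) i i'

lemma one_vecMul_coarseC (hP : 1 ᵥ* P = 1) (hf : Function.Surjective f)
    (hμ : ∀ j, 0 < μ j) : 1 ᵥ* CoarseC P f μ = 1 := by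
  rw [CoarseC, ← vecMul_vecMul, ← vecMul_vecMul, one_vecMul_agg, hP, one_vecMul_disagg f hf hμ]

lemma coarseC_mulVec_agg_mulVec (hμ : ∀ j, 0 < μ j) (hinv : P *ᵥ μ = μ) :
    CoarseC P f μ *ᵥ (Agg f *ᵥ μ) = Agg f *ᵥ μ := by
  rw [CoarseC, ← mulVec_mulVec, ← mulVec_mulVec, disagg_mulVec_agg_mulVec f hμ, hinv]

lemma coarseC_apply_ne_zero (hP : ∀ i j, 0 ≤ P i j) (hμ : ∀ j, 0 < μ j) {x y : Fin N}
    (hxy : P x y ≠ 0) : CoarseC P f μ (f x) (f y) ≠ 0 := by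
  have hAP : P x y ≤ (Agg f * P) (f x) y := by
    simpa [Agg] using le_mul_apply (agg_nonneg f) hP (f x) x y
  refine (lt_of_lt_of_le ?_ (le_mul_apply (mul_apply_nonneg (agg_nonneg f) hP)
    (disagg_nonneg f hμ) (f x) y (f y))).ne'
  exact mul_pos (((hP x y).lt_of_ne' hxy).trans_le hAP) (disagg_apply_self_pos f hμ y)

lemma transGen_coarseC (hP : ∀ i j, 0 ≤ P i j) (hirr : Irred P) (hf : Function.Surjective f)
    (hμ : ∀ j, 0 < μ j) (i i' : Fin n) :
    TransGen (fun a b => CoarseC P f μ a b ≠ 0) i i' := by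
  obtain ⟨x, rfl⟩ := hf i
  obtain ⟨y, rfl⟩ := hf i'
  exact (hirr.transGen x y).lift f fun a b => coarseC_apply_ne_zero P f hP hμ

lemma agg_mul_fundamental_mul_disagg (hf : Function.Surjective f) (hμ : ∀ j, 0 < μ j) :
    Agg f * (1 - P + vecMulVec μ 1) * Disagg f μ =
      1 - CoarseC P f μ + vecMulVec (Agg f *ᵥ μ) 1 := by
  rw [Matrix.mul_add, Matrix.mul_sub, Matrix.mul_one, mul_vecMulVec, Matrix.add_mul,
    Matrix.sub_mul, agg_mul_disagg f hf hμ, vecMulVec_mul, one_vecMul_disagg f hf hμ, CoarseC]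

lemma isUnit_det_coarse (hP : ColStoch P) (hirr : Irred P) (hμ : ∀ j, 0 < μ j)
    (hμsum : ∑ j, μ j = 1) (hinv : P *ᵥ μ = μ) (hf : Function.Surjective f) :
    IsUnit (Agg f * (1 - P + vecMulVec μ 1) * Disagg f μ).det := by
  rw [agg_mul_fundamental_mul_disagg P f hf hμ]
  refine isUnit_det_one_sub_add_vecMulVec (coarseC_nonneg P f hP.1 hμ)
    (transGen_coarseC P f hP.1 hirr hf hμ) (one_vecMul_coarseC P f hP.one_vecMul hf hμ)
    (agg_mulVec_pos_of_surjective f hf hμ) (coarseC_mulVec_agg_mulVec P f hμ hinv) ?_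
  rw [dotProduct_mulVec, one_vecMul_agg, one_dotProduct, hμsum]

end Coarse

section CoarseProjection

variable {R ι κ : Type*} [CommRing R] [Fintype ι] [Fintype κ] [DecidableEq κ]
  {A : Matrix κ ι R} {D : Matrix ι κ R} {K : Matrix ι ι R}

lemma coarseProj_mul_proj (hK : IsUnit (A * K * D).det) :
    D * (A * K * D)⁻¹ * (A * K) * (D * A) = D * A := by
  calc D * (A * K * D)⁻¹ * (A * K) * (D * A) = D * ((A * K * D)⁻¹ * (A * K * D)) * A := by
        simp only [Matrix.mul_assoc]
    _ = D * A := by rw [nonsing_inv_mul _ hK, Matrix.mul_one]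

lemma proj_mul_one_sub_mul_one_sub_coarseProj [DecidableEq ι] (hAD : A * D = 1)
    (hK : IsUnit (A * K * D).det) :
    D * A * ((1 - K) * (1 - D * (A * K * D)⁻¹ * (A * K))) =
      D * A - D * (A * K * D)⁻¹ * (A * K) := by
  set S := D * (A * K * D)⁻¹ * (A * K)
  have hAK : A * K * (1 - S) = 0 := by
    rw [Matrix.mul_sub, Matrix.mul_one, sub_eq_zero]
    calc A * K = A * K * D * (A * K * D)⁻¹ * (A * K) := by
          rw [mul_nonsing_inv _ hK, Matrix.one_mul]
      _ = A * K * S := by simp only [S, Matrix.mul_assoc]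
  have hA : A * (1 - S) = A - (A * K * D)⁻¹ * (A * K) := by
    rw [Matrix.mul_sub, Matrix.mul_one]
    calc A - A * S = A - A * D * (A * K * D)⁻¹ * (A * K) := by simp only [S, Matrix.mul_assoc]
      _ = A - (A * K * D)⁻¹ * (A * K) := by rw [hAD, Matrix.one_mul]
  calc D * A * ((1 - K) * (1 - S)) = D * (A * (1 - K) * (1 - S)) := by
        simp only [Matrix.mul_assoc]
    _ = D * (A * (1 - S) - A * K * (1 - S)) := by
        rw [Matrix.mul_sub A, Matrix.mul_one, Matrix.sub_mul]
    _ = D * A - S := by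
        rw [hA, hAK, sub_zero, Matrix.mul_sub]
        simp only [S, Matrix.mul_assoc]

end CoarseProjection

section ErrorPropagation

variable {N n : ℕ} (P : Matrix (Fin N) (Fin N) ℝ) (f : Fin N → Fin n) {μ : Fin N → ℝ}

lemma jop_eq : Jop P f μ μ = (1 - (1 - P + vecMulVec μ 1)) * (1 - CoarseS P f μ μ) := by
  rw [Jop, hatP]
  congr 1
  abel

lemma jop_mul_one_sub_piProj (hK : IsUnit (Agg f * (1 - P + vecMulVec μ 1) * Disagg f μ).det) :
    Jop P f μ μ * (1 - PiProj f μ) = Jop P f μ μ := by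
  have hSP : CoarseS P f μ μ * PiProj f μ = PiProj f μ := coarseProj_mul_proj hK
  rw [Matrix.mul_sub, Matrix.mul_one, Jop, Matrix.mul_assoc, Matrix.sub_mul, Matrix.one_mul,
    hSP, sub_self, Matrix.mul_zero, sub_zero]

lemma piProj_mul_jop (hf : Function.Surjective f) (hμ : ∀ j, 0 < μ j)
    (hK : IsUnit (Agg f * (1 - P + vecMulVec μ 1) * Disagg f μ).det) :
    PiProj f μ * Jop P f μ μ = PiProj f μ - CoarseS P f μ μ :=
  by rw [jop_eq]; exact proj_mul_one_sub_mul_one_sub_coarseProj (agg_mul_disagg f hf hμ) hK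

end ErrorPropagation

section EpsInner

variable {N n : ℕ} (f : Fin N → Fin n) {μ : Fin N → ℝ} (ε : ℝ)

lemma innerEps_comm (hμ : ∀ j, μ j ≠ 0) (x y : Fin N → ℝ) :
    innerEps f μ ε x y = innerEps f μ ε y x := by
  rw [innerEps, innerEps, innerW_mulVec_comm (isSymm_diagonal_inv_mul_one_sub_piProj f hμ),
    innerW_mulVec_comm (isSymm_diagonal_inv_mul_piProj f hμ), innerW_comm _ _ y,
    innerW_comm _ _ y]

lemma innerEps_add_left (x y z : Fin N → ℝ) :
    innerEps f μ ε (x + y) z = innerEps f μ ε x z + innerEps f μ ε y z := by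
  simp only [innerEps, innerW_add_left]
  ring

lemma innerEps_smul_left (c : ℝ) (x y : Fin N → ℝ) :
    innerEps f μ ε (c • x) y = c * innerEps f μ ε x y := by
  simp only [innerEps, innerW_smul_left]
  ring

lemma innerEps_self (hf : Function.Surjective f) (hμ : ∀ j, 0 < μ j) (x : Fin N → ℝ) :
    innerEps f μ ε x x =
      innerW (fun j => (μ j)⁻¹) ((1 - PiProj f μ) *ᵥ x) ((1 - PiProj f μ) *ᵥ x) +
        ε * innerW (fun j => (μ j)⁻¹) (PiProj f μ *ᵥ x) (PiProj f μ *ᵥ x) := by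
  have hμ' : ∀ j, μ j ≠ 0 := fun j => (hμ j).ne'
  rw [innerEps,
    innerW_mulVec_self (isSymm_diagonal_inv_mul_one_sub_piProj f hμ')
      (isIdempotentElem_piProj f hf hμ).one_sub,
    innerW_mulVec_self (isSymm_diagonal_inv_mul_piProj f hμ') (isIdempotentElem_piProj f hf hμ)]

lemma innerEps_self_pos (hf : Function.Surjective f) (hμ : ∀ j, 0 < μ j) (hε : 0 < ε)
    {x : Fin N → ℝ} (hx : x ≠ 0) : 0 < innerEps f μ ε x x := by
  have hw : ∀ j, 0 < (μ j)⁻¹ := fun j => inv_pos.mpr (hμ j)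
  have hsplit : (1 - PiProj f μ) *ᵥ x + PiProj f μ *ᵥ x = x := by
    rw [sub_mulVec, one_mulVec, sub_add_cancel]
  rw [innerEps_self f ε hf hμ]
  by_cases hQ : (1 - PiProj f μ) *ᵥ x = 0
  · have hP : PiProj f μ *ᵥ x ≠ 0 := fun h => hx (by rw [← hsplit, hQ, h, add_zero])
    exact add_pos_of_nonneg_of_pos (innerW_self_nonneg (fun j => (hw j).le) _)
      (mul_pos hε (innerW_self_pos hw hP))
  · exact add_pos_of_pos_of_nonneg (innerW_self_pos hw hQ)
      (mul_nonneg hε.le (innerW_self_nonneg (fun j => (hw j).le) _))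

lemma opNormEps_le_of_mul_one_sub_piProj (hf : Function.Surjective f) (hμ : ∀ j, 0 < μ j)
    (hε : 0 ≤ ε) {M : Matrix (Fin N) (Fin N) ℝ} (hM : M * (1 - PiProj f μ) = M) :
    opNormEps f μ ε M ≤
      √(opNormW (fun j => (μ j)⁻¹) ((1 - PiProj f μ) * M) ^ 2 +
        ε * opNormW (fun j => (μ j)⁻¹) (PiProj f μ * M) ^ 2) := by
  set w : Fin N → ℝ := fun j => (μ j)⁻¹
  have hw : ∀ j, 0 < w j := fun j => inv_pos.mpr (hμ j)
  set a := opNormW w ((1 - PiProj f μ) * M)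
  set b := opNormW w (PiProj f μ * M)
  have hc : 0 ≤ a ^ 2 + ε * b ^ 2 := by positivity
  refine csInf_le ⟨0, fun _ h => h.1⟩ ⟨Real.sqrt_nonneg _, fun x => ?_⟩
  rw [normEps, normEps, ← Real.sqrt_mul hc]
  refine Real.sqrt_le_sqrt ?_
  set u := (1 - PiProj f μ) *ᵥ x
  have hMx : M *ᵥ x = M *ᵥ u := by rw [mulVec_mulVec, hM]
  have hu : innerW w u u ≤ innerEps f μ ε x x := by
    rw [innerEps_self f ε hf hμ]
    exact le_add_of_nonneg_right (mul_nonneg hε (innerW_self_nonneg (fun j => (hw j).le) _))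
  calc innerEps f μ ε (M *ᵥ x) (M *ᵥ x)
      = innerW w (((1 - PiProj f μ) * M) *ᵥ u) (((1 - PiProj f μ) * M) *ᵥ u) +
          ε * innerW w ((PiProj f μ * M) *ᵥ u) ((PiProj f μ * M) *ᵥ u) := by
        rw [innerEps_self f ε hf hμ, hMx, ← mulVec_mulVec, ← mulVec_mulVec]
    _ ≤ a ^ 2 * innerW w u u + ε * (b ^ 2 * innerW w u u) :=
        add_le_add (innerW_mulVec_self_le hw _ u)
          (mul_le_mul_of_nonneg_left (innerW_mulVec_self_le hw _ u) hε)
    _ = (a ^ 2 + ε * b ^ 2) * innerW w u u := by ring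
    _ ≤ (a ^ 2 + ε * b ^ 2) * innerEps f μ ε x x := mul_le_mul_of_nonneg_left hu hc

end EpsInner

/-- `⟨·,·⟩_ε` is an inner product and
`‖J(μ)‖_ε ≤ √(‖(I-Π(μ))J(μ)‖²_{1/μ} + ε ‖Π(μ)-S(μ)‖²_{1/μ})`. -/
theorem stmt13 {N n : ℕ} (P : Matrix (Fin N) (Fin N) ℝ)
    (μ : Fin N → ℝ) (hP : ColStoch P) (hirr : Irred P)
    (hμpos : ∀ i, 0 < μ i) (hμsum : ∑ i, μ i = 1) (hinv : P.mulVec μ = μ)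
    (f : Fin N → Fin n) (hf : Function.Surjective f)
    (ε : ℝ) (hε : 0 < ε) :
    (∀ x y, innerEps f μ ε x y = innerEps f μ ε y x) ∧
      (∀ x y z, innerEps f μ ε (x + y) z = innerEps f μ ε x z + innerEps f μ ε y z) ∧
      (∀ (c : ℝ) (x y : Fin N → ℝ), innerEps f μ ε (c • x) y = c * innerEps f μ ε x y) ∧
      (∀ x : Fin N → ℝ, x ≠ 0 → 0 < innerEps f μ ε x x) ∧
      opNormEps f μ ε (Jop P f μ μ) ≤
        Real.sqrt (opNormW (fun i => (μ i)⁻¹) ((1 - PiProj f μ) * Jop P f μ μ) ^ 2 +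
          ε * opNormW (fun i => (μ i)⁻¹) (PiProj f μ - CoarseS P f μ μ) ^ 2) := by
  have hK := isUnit_det_coarse P f hP hirr hμpos hμsum hinv hf
  refine ⟨innerEps_comm f ε fun j => (hμpos j).ne', innerEps_add_left f ε,
    innerEps_smul_left f ε, fun x => innerEps_self_pos f ε hf hμpos hε, ?_⟩
  rw [← piProj_mul_jop P f hf hμpos hK]
  exact opNormEps_le_of_mul_one_sub_piProj f ε hf hμpos hε.le (jop_mul_one_sub_piProj P f hK)
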